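/- arXiv:2508.17433 — 3 statements merged into one kernel-verified Lean document; each statement's English description precedes it below -/
import Mathlib

section
/- Let $k, D > 0$ and $\theta_e, \theta_c \in \mathbb{R}$, define $\mu = \sin\!\left(\frac{\theta_c - \theta_e}{2}\right)$, and suppose $|\mu| < \frac{\pi}{2kD}$. Define $f(\theta) = 2 - 2\cos\!\left(2kD\mu\,\sin\!\left(\frac{\theta_e + \theta_c}{2} - \theta\right)\right)$. Then for $\theta^* = \frac{\theta_c + \theta_e}{2} + \frac{\pi}{2}$ (and likewise for $\theta^* = \frac{\theta_c + \theta_e}{2} - \frac{\pi}{2}$) one has $f(\theta^*) = 2 - 2\cos(2kD\mu)$ and $f(\theta) \le f(\theta^*)$ for all $\theta \in \mathbb{R}$. -/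
/-! With `c = 2kDμ` we have `|c| < π`, and `f θ = 2 - 2 cos (c sin (…))`. Since `cos` decreases in `|x|`
on `[0, π]` and `|c sin (…)| ≤ |c|`, `f` is largest where `|sin (…)| = 1`, i.e. at `θ*`. -/

open Real

lemma abs_mul_lt_of_abs_lt_div {a b c : ℝ} (hb : 0 < b) (h : |a| < b / c) : |c * a| < b := by
  have hc : 0 < c := (div_pos_iff_of_pos_left hb).mp ((abs_nonneg a).trans_lt h)
  rw [abs_mul, abs_of_pos hc]
  exact (lt_div_iff₀' hc).mp h

lemma Real.cos_le_cos_mul_of_abs_le_one {x s : ℝ} (hx : |x| ≤ π) (hs : |s| ≤ 1) :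
    cos x ≤ cos (x * s) := by
  rw [← cos_abs x, ← cos_abs (x * s)]
  refine cos_le_cos_of_nonneg_of_le_pi (abs_nonneg _) hx ?_
  calc |x * s| = |x| * |s| := abs_mul x s
    _ ≤ |x| := mul_le_of_le_one_right (abs_nonneg x) hs

lemma Real.cos_mul_of_abs_eq_one (x : ℝ) {s : ℝ} (hs : |s| = 1) : cos (x * s) = cos x := by
  rcases abs_eq zero_le_one |>.mp hs with rfl | rfl
  · rw [mul_one]
  · rw [mul_neg_one, cos_neg]

theorem orientation_maximizer_small_mu_general
    (k D θe θc : ℝ)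
    (μ : ℝ)
    (hμ : |μ| < Real.pi / (2 * k * D))
    (f : ℝ → ℝ)
    (hf : ∀ θ, f θ = 2 - 2 * Real.cos (2 * k * D * μ * Real.sin ((θe + θc) / 2 - θ)))
    (θstar : ℝ)
    (hθstar : θstar = (θc + θe) / 2 + Real.pi / 2 ∨
              θstar = (θc + θe) / 2 - Real.pi / 2) :
    f θstar = 2 - 2 * Real.cos (2 * k * D * μ) ∧ ∀ θ : ℝ, f θ ≤ f θstar := by
  have hphase : |2 * k * D * μ| ≤ π := (abs_mul_lt_of_abs_lt_div pi_pos hμ).le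
  have hsin : |sin ((θe + θc) / 2 - θstar)| = 1 := by
    rcases hθstar with rfl | rfl
    · rw [show (θe + θc) / 2 - ((θc + θe) / 2 + π / 2) = -(π / 2) by ring]
      simp
    · rw [show (θe + θc) / 2 - ((θc + θe) / 2 - π / 2) = π / 2 by ring]
      simp
  have hstar : f θstar = 2 - 2 * cos (2 * k * D * μ) := by
    rw [hf, cos_mul_of_abs_eq_one _ hsin]
  refine ⟨hstar, fun θ => ?_⟩
  rw [hf, hstar]
  have := cos_le_cos_mul_of_abs_le_one hphase (abs_sin_le_one ((θe + θc) / 2 - θ))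
  linarith

theorem orientation_maximizer_small_mu
    (k D θe θc : ℝ) (hk : 0 < k) (hD : 0 < D)
    (μ : ℝ) (hμdef : μ = Real.sin ((θc - θe) / 2))
    (hμ : |μ| < Real.pi / (2 * k * D))
    (f : ℝ → ℝ)
    (hf : ∀ θ, f θ = 2 - 2 * Real.cos (2 * k * D * μ * Real.sin ((θe + θc) / 2 - θ)))
    (θstar : ℝ)
    (hθstar : θstar = (θc + θe) / 2 + Real.pi / 2 ∨
              θstar = (θc + θe) / 2 - Real.pi / 2) :
    f θstar = 2 - 2 * Real.cos (2 * k * D * μ) ∧ ∀ θ : ℝ, f θ ≤ f θstar :=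
  orientation_maximizer_small_mu_general k D θe θc μ hμ f hf θstar hθstar
end

section
/- Let $k, D > 0$ and $\theta_e, \theta_c \in \mathbb{R}$, define $\mu = \sin\!\left(\frac{\theta_c - \theta_e}{2}\right)$, and suppose $|\mu| \ge \frac{\pi}{2kD}$. Define $f(\theta) = 2 - 2\cos\!\left(2kD\mu\,\sin\!\left(\frac{\theta_e + \theta_c}{2} - \theta\right)\right)$. Then for $\theta^* = \frac{\theta_c + \theta_e}{2} + \arcsin\!\left(\frac{\pi}{2kD|\mu|}\right)$ (and likewise for $\theta^* = \frac{\theta_c + \theta_e}{2} - \arcsin\!\left(\frac{\pi}{2kD|\mu|}\right)$) one has $f(\theta^*) = 4$, and $f(\theta) \le 4$ for all $\theta \in \mathbb{R}$; hence $\theta^*$ is a global maximizer of $f$. -/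
open Real

theorem orientation_maximizer_large_mu
    (k D θe θc : ℝ) (hk : 0 < k) (hD : 0 < D)
    (μ : ℝ) (hμdef : μ = Real.sin ((θc - θe) / 2))
    (hμ : Real.pi / (2 * k * D) ≤ |μ|)
    (f : ℝ → ℝ)
    (hf : ∀ θ, f θ = 2 - 2 * Real.cos (2 * k * D * μ * Real.sin ((θe + θc) / 2 - θ)))
    (θstar : ℝ)
    (hθstar : θstar = (θc + θe) / 2 + Real.arcsin (Real.pi / (2 * k * D * |μ|)) ∨
              θstar = (θc + θe) / 2 - Real.arcsin (Real.pi / (2 * k * D * |μ|))) :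
    f θstar = 4 ∧ ∀ θ : ℝ, f θ ≤ 4 := by
  have hμpos : 0 < |μ| := lt_of_lt_of_le (by positivity) hμ
  have hμne : μ ≠ 0 := fun h => by simp [h] at hμpos
  have hπle : Real.pi ≤ 2 * k * D * |μ| := by
    rw [div_le_iff₀ (by positivity)] at hμ; nlinarith
  have hx1 : Real.pi / (2 * k * D * |μ|) ≤ 1 := by
    rw [div_le_one (by positivity)]; exact hπle
  have hx0 : (0:ℝ) ≤ Real.pi / (2 * k * D * |μ|) := by positivity
  have hsinA : Real.sin (Real.arcsin (Real.pi / (2 * k * D * |μ|)))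
      = Real.pi / (2 * k * D * |μ|) := Real.sin_arcsin (by linarith) hx1
  set A := Real.arcsin (Real.pi / (2 * k * D * |μ|)) with hA
  have key : Real.cos (2 * k * D * μ * Real.sin ((θe + θc) / 2 - θstar)) = -1 := by
    have harg : ∀ s : ℝ, (s = Real.pi / (2 * k * D * |μ|) ∨
        s = -(Real.pi / (2 * k * D * |μ|))) →
        Real.cos (2 * k * D * μ * s) = -1 := by
      intro s hs
      have e : 2 * k * D * μ * (Real.pi / (2 * k * D * |μ|)) = Real.pi * (μ / |μ|) := by
        field_simp
      rcases abs_cases μ with ⟨h1, _⟩ | ⟨h1, _⟩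
      · have hd : μ / |μ| = 1 := by rw [h1]; exact div_self hμne
        rcases hs with rfl | rfl
        · rw [e, hd]; simp
        · rw [mul_neg, e, hd]; simp
      · have hd : μ / |μ| = -1 := by rw [h1]; field_simp
        rcases hs with rfl | rfl
        · rw [e, hd]; simp [mul_neg_one]
        · rw [mul_neg, e, hd]; simp [mul_neg_one]
    rcases hθstar with rfl | rfl
    · apply harg
      right
      have : (θe + θc) / 2 - ((θc + θe) / 2 + A) = -A := by ring
      rw [this, Real.sin_neg, hsinA]
    · apply harg
      left
      have : (θe + θc) / 2 - ((θc + θe) / 2 - A) = A := by ring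
      rw [this, hsinA]
  constructor
  · rw [hf, key]; ring
  · intro θ
    rw [hf]
    have := Real.neg_one_le_cos (2 * k * D * μ * Real.sin ((θe + θc) / 2 - θ))
    linarith
end

section
/- For every real $c$, the value $2 - 2\cos(\min(|c|, \pi))$ is the greatest element of the range of the function $\theta \mapsto 2 - 2\cos(c\,\sin\theta)$ on $\mathbb{R}$; that is, $2 - 2\cos(c\sin\theta) \le 2 - 2\cos(\min(|c|,\pi))$ for all $\theta \in \mathbb{R}$, and this bound is attained at some $\theta \in \mathbb{R}$. -/
/-! As `θ` varies, `c * sin θ` sweeps `[-|c|, |c|]`, and on that interval `cos` is smallest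
at `min |c| π`. -/

open Real

lemma cos_min_pi_le_cos_of_abs_le {a x : ℝ} (hx : |x| ≤ a) : cos (min a π) ≤ cos x := by
  rcases le_or_gt |x| π with hπ | hπ
  · rw [← cos_abs x]
    exact cos_le_cos_of_nonneg_of_le_pi (abs_nonneg x) (min_le_right a π) (le_min hx hπ)
  · rw [min_eq_right (hπ.trans_le hx).le, cos_pi]
    exact neg_one_le_cos x

lemma abs_mul_sin_le (c θ : ℝ) : |c * sin θ| ≤ |c| := by
  rw [abs_mul]
  exact mul_le_of_le_one_right (abs_nonneg c) (abs_sin_le_one θ)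

lemma exists_abs_mul_sin_eq {c t : ℝ} (ht₀ : 0 ≤ t) (ht : t ≤ |c|) :
    ∃ θ, |c * sin θ| = t := by
  rcases eq_or_ne c 0 with rfl | hc
  · exact ⟨0, by simpa using (ht.antisymm (by simpa using ht₀)).symm⟩
  have hc' : 0 < |c| := abs_pos.mpr hc
  refine ⟨arcsin (t / |c|), ?_⟩
  have hq₀ : 0 ≤ t / |c| := div_nonneg ht₀ hc'.le
  rw [sin_arcsin (by linarith) ((div_le_one hc').mpr ht), abs_mul, abs_of_nonneg hq₀,
    mul_div_cancel₀ t hc'.ne']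

theorem beampattern_sup (c : ℝ) :
    IsGreatest (Set.range fun θ : ℝ => 2 - 2 * Real.cos (c * Real.sin θ))
      (2 - 2 * Real.cos (min |c| Real.pi)) := by
  constructor
  · obtain ⟨θ, hθ⟩ := exists_abs_mul_sin_eq (le_min (abs_nonneg c) pi_pos.le) (min_le_left _ _)
    exact ⟨θ, by dsimp only; rw [← cos_abs (c * sin θ), hθ]⟩
  · rintro _ ⟨θ, rfl⟩
    have := cos_min_pi_le_cos_of_abs_le (abs_mul_sin_le c θ)
    dsimp only
    linarith
end
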